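/- arXiv:2605.23441 — 6 statements merged into one kernel-verified Lean document; each statement's English description precedes it below -/
import Mathlib

section
/- Every right ω-narrow strongly topological gyrogroup G is right ω-balanced: for every open neighborhood U of 0 there exists a countable family γ of open neighborhoods of 0 such that for each x ∈ G there is V ∈ γ with x ⊕ (V ⊕ (⊖x)) ⊆ U. -/
universe u v

class Gyrogroup (G : Type u) where
  add : G → G → G
  zero : G
  neg : G → G
  gyr : G → G → Equiv.Perm G
  zero_add : ∀ a : G, add zero a = a
  add_zero : ∀ a : G, add a zero = a
  neg_add : ∀ a : G, add (neg a) a = zero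
  add_neg : ∀ a : G, add a (neg a) = zero
  gyr_hom : ∀ x y a b : G, gyr x y (add a b) = add (gyr x y a) (gyr x y b)
  gyrassoc : ∀ x y z : G, add x (add y z) = add (add x y) (gyr x y z)
  loop : ∀ x y : G, gyr (add x y) y = gyr x y

open Gyrogroup

section Aux
variable {G : Type u} [Gyrogroup G]

lemma gyro_left_cancel {a b c : G} (h : add a b = add a c) : b = c := by
  have h2 : add (neg a) (add a b) = add (neg a) (add a c) := by rw [h]
  rw [gyrassoc, gyrassoc, Gyrogroup.neg_add, Gyrogroup.zero_add, Gyrogroup.zero_add] at h2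
  exact (gyr (neg a) a).injective h2

lemma gyro_gyr_zero (x y : G) : gyr x y (zero : G) = zero := by
  have h := gyr_hom x y (zero : G) zero
  rw [Gyrogroup.zero_add] at h
  have h2 : add (gyr x y (zero : G)) (zero : G)
      = add (gyr x y (zero : G)) (gyr x y (zero : G)) := by
    rw [Gyrogroup.add_zero]; exact h
  exact (gyro_left_cancel h2).symm

lemma gyro_gyr_neg (x y a : G) : gyr x y (neg a) = neg (gyr x y a) := by
  have h1 : add (gyr x y a) (gyr x y (neg a)) = zero := by
    rw [← gyr_hom, Gyrogroup.add_neg, gyro_gyr_zero]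
  exact gyro_left_cancel (h1.trans (Gyrogroup.add_neg (gyr x y a)).symm)

lemma gyro_gyr_zero_left (b z : G) : gyr (zero : G) b z = z := by
  have h := gyrassoc (zero : G) b z
  rw [Gyrogroup.zero_add, Gyrogroup.zero_add] at h
  exact (gyro_left_cancel h).symm

lemma gyro_gyr_neg_self (a z : G) : gyr a (neg a) z = z := by
  have h := loop a (neg a)
  rw [Gyrogroup.add_neg] at h
  rw [← h]
  exact gyro_gyr_zero_left _ _

lemma gyro_neg_add_rev (x y : G) : neg (add x y) = gyr x y (add (neg y) (neg x)) := by
  have h : add (add x y) (gyr x y (add (neg y) (neg x))) = zero := by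
    rw [← gyrassoc, gyrassoc y (neg y) (neg x), Gyrogroup.add_neg, Gyrogroup.zero_add, gyro_gyr_neg_self, Gyrogroup.add_neg]
  exact (gyro_left_cancel (h.trans (Gyrogroup.add_neg (add x y)).symm)).symm

lemma gyro_conj_formula (w a v' : G) :
    add (add w a) (add (gyr w a v') (neg (add w a))) =
      add w (add (add a (add v' (neg a)))
        (gyr a (add v' (neg a)) (gyr v' (neg a) (neg w)))) := by
  rw [gyro_neg_add_rev, ← gyr_hom, ← gyrassoc, gyrassoc v' (neg a) (neg w),
    gyrassoc a (add v' (neg a))]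

end Aux

/-- Every right ω-narrow strongly topological gyrogroup is right ω-balanced. -/
theorem right_omega_narrow_balanced {G : Type u} [Gyrogroup G] [TopologicalSpace G] [T2Space G]
    (hcadd : Continuous fun p : G × G => add p.1 p.2)
    (hcneg : Continuous (neg : G → G))
    -- strongly topological: a symmetric, gyr-invariant neighborhood base μ at 0
    (μ : Set (Set G))
    (hopen : ∀ U ∈ μ, IsOpen U ∧ (zero : G) ∈ U)
    (hbase : ∀ V : Set G, IsOpen V → (zero : G) ∈ V → ∃ U ∈ μ, U ⊆ V)
    (hsym : ∀ U ∈ μ, ∀ x ∈ U, neg x ∈ U)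
    (hgyrμ : ∀ U ∈ μ, ∀ x y : G, (gyr x y) '' U = U)
    -- right ω-narrow: G = V ⊕ A for some countable A
    (hnarrow : ∀ V : Set G, IsOpen V → (zero : G) ∈ V →
      ∃ A : Set G, A.Countable ∧ ∀ g : G, ∃ v ∈ V, ∃ a ∈ A, g = add v a) :
    -- right ω-balanced
    ∀ U : Set G, IsOpen U → (zero : G) ∈ U →
      ∃ γ : Set (Set G), γ.Countable ∧ (∀ V ∈ γ, IsOpen V ∧ (zero : G) ∈ V) ∧
        ∀ x : G, ∃ V ∈ γ, ∀ v ∈ V, add x (add v (neg x)) ∈ U := by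
  intro U hU h0U
  -- find open S, T with 0 ∈ S, 0 ∈ T, S ⊕ T ⊆ U
  have key : ∀ Z : Set G, IsOpen Z → (zero : G) ∈ Z →
      ∃ S T : Set G, IsOpen S ∧ IsOpen T ∧ (zero : G) ∈ S ∧ (zero : G) ∈ T ∧
        ∀ s ∈ S, ∀ t ∈ T, add s t ∈ Z := by
    intro Z hZ h0Z
    have hpre : IsOpen ((fun p : G × G => add p.1 p.2) ⁻¹' Z) := hZ.preimage hcadd
    have h00 : ((zero : G), (zero : G)) ∈ (fun p : G × G => add p.1 p.2) ⁻¹' Z := by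
      simp only [Set.mem_preimage]
      rw [Gyrogroup.zero_add]
      exact h0Z
    obtain ⟨S, T, hS, hT, h0S, h0T, hST⟩ := isOpen_prod_iff.mp hpre zero zero h00
    exact ⟨S, T, hS, hT, h0S, h0T, fun s hs t ht => hST (Set.mk_mem_prod hs ht)⟩
  obtain ⟨S, T, hS, hT, h0S, h0T, hST⟩ := key U hU h0U
  obtain ⟨S', T', hS', hT', h0S', h0T', hST'⟩ := key T hT h0T
  -- W ∈ μ inside S ∩ S' ∩ T'
  obtain ⟨W, hWμ, hWsub⟩ := hbase (S ∩ S' ∩ T')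
    ((hS.inter hS').inter hT') ⟨⟨h0S, h0S'⟩, h0T'⟩
  obtain ⟨hWopen, h0W⟩ := hopen W hWμ
  -- countable A with G = W ⊕ A
  obtain ⟨A, hAc, hA⟩ := hnarrow W hWopen h0W
  -- for each a, choose Va ∈ μ with a ⊕ (Va ⊕ ⊖a) ⊆ W
  have hV : ∀ a : G, ∃ V ∈ μ, ∀ v ∈ V, add a (add v (neg a)) ∈ W := by
    intro a
    have hc : Continuous (fun v : G => add a (add v (neg a))) := by
      have h1 : Continuous (fun v : G => add v (neg a)) :=
        hcadd.comp (continuous_id.prodMk continuous_const)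
      exact hcadd.comp (continuous_const.prodMk h1)
    have hpre : IsOpen ((fun v : G => add a (add v (neg a))) ⁻¹' W) := hWopen.preimage hc
    have h0 : (zero : G) ∈ (fun v : G => add a (add v (neg a))) ⁻¹' W := by
      simp only [Set.mem_preimage]
      rw [Gyrogroup.zero_add, Gyrogroup.add_neg]
      exact h0W
    obtain ⟨V, hVμ, hVsub⟩ := hbase _ hpre h0
    exact ⟨V, hVμ, fun v hv => hVsub hv⟩
  choose Va hVaμ hVaW using hV
  refine ⟨Va '' A, hAc.image Va, ?_, ?_⟩
  · rintro V ⟨a, _, rfl⟩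
    exact hopen _ (hVaμ a)
  · intro x
    obtain ⟨w, hwW, a, haA, hx⟩ := hA x
    refine ⟨Va a, Set.mem_image_of_mem Va haA, ?_⟩
    intro v hv
    -- v = gyr w a v' for some v' ∈ Va a
    have himg : (gyr w a) '' (Va a) = Va a := hgyrμ _ (hVaμ a) w a
    have hv2 : v ∈ (gyr w a) '' (Va a) := by rw [himg]; exact hv
    obtain ⟨v', hv'V, hv'⟩ := hv2
    -- membership facts in W
    have hmemW : ∀ p q z : G, z ∈ W → gyr p q z ∈ W := by
      intro p q z hz
      have := hgyrμ W hWμ p q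
      exact this ▸ Set.mem_image_of_mem _ hz
    have hb : add a (add v' (neg a)) ∈ W := hVaW a v' hv'V
    have hnw : neg w ∈ W := hsym W hWμ w hwW
    have hc : gyr a (add v' (neg a)) (gyr v' (neg a) (neg w)) ∈ W :=
      hmemW _ _ _ (hmemW _ _ _ hnw)
    -- the algebraic identity
    have hform := gyro_conj_formula w a v'
    rw [hx, ← hv', hform]
    -- w ⊕ (b ⊕ c) ∈ U
    have hbc : add (add a (add v' (neg a)))
        (gyr a (add v' (neg a)) (gyr v' (neg a) (neg w))) ∈ T :=
      hST' _ ((hWsub hb).1.2 ) _ ((hWsub hc).2)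
    exact hST w ((hWsub hwW).1.1) _ hbc
end

section
/- Let G be a right ω-balanced topological gyrogroup and γ a countable family of open neighborhoods of 0. Then there exists a countable family γ* of open neighborhoods of 0 such that: (1) γ ⊆ γ*; (2) γ* is closed under finite intersections; (3) for each U ∈ γ* there exists V ∈ γ* with V = ⊖V and V ⊕ V ⊆ U; (4) for each U ∈ γ* and a ∈ G there exists V ∈ γ* with a ⊕ (V ⊕ (⊖a)) ⊆ U. -/
universe u v

open Gyrogroup

lemma gyro_left_inj {G : Type u} [Gyrogroup G] (a : G) :
    Function.Injective (fun z : G => add a z) := by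
  intro z w h
  have key : ∀ t : G, add (neg a) (add a t) = gyr (neg a) a t := fun t => by
    rw [gyrassoc, Gyrogroup.neg_add, Gyrogroup.zero_add]
  have : gyr (neg a) a z = gyr (neg a) a w := by
    rw [← key, ← key]; simpa using congrArg (add (neg a)) h
  exact (gyr (neg a) a).injective this

lemma gyro_neg_neg {G : Type u} [Gyrogroup G] (a : G) : neg (neg a) = a :=
  gyro_left_inj (neg a) (by simp only [Gyrogroup.add_neg, Gyrogroup.neg_add])

lemma gyro_neg_zero {G : Type u} [Gyrogroup G] : neg (zero : G) = zero := by
  have h1 := Gyrogroup.add_neg (zero : G)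
  rwa [Gyrogroup.zero_add] at h1

/-- Symmetric square-root neighborhoods exist. -/
lemma gyro_root {G : Type u} [Gyrogroup G] [TopologicalSpace G]
    (hcadd : Continuous fun p : G × G => add p.1 p.2)
    (hcneg : Continuous (neg : G → G))
    (U : Set G) (hUo : IsOpen U) (hUz : (zero : G) ∈ U) :
    ∃ V : Set G, IsOpen V ∧ (zero : G) ∈ V ∧ neg '' V = V ∧
      ∀ a ∈ V, ∀ b ∈ V, add a b ∈ U := by
  have hz : add (zero : G) zero = zero := Gyrogroup.zero_add _
  have hmem : {p : G × G | add p.1 p.2 ∈ U} ∈ nhds ((zero : G), (zero : G)) := by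
    have := hcadd.continuousAt (x := ((zero : G), (zero : G)))
    exact this.preimage_mem_nhds (by rw [hz]; exact hUo.mem_nhds hUz)
  rcases mem_nhds_prod_iff'.mp hmem with ⟨w1, w2, hw1o, hw1z, hw2o, hw2z, hsub⟩
  set W : Set G := w1 ∩ w2 with hW
  have hWo : IsOpen W := hw1o.inter hw2o
  have hWz : (zero : G) ∈ W := ⟨hw1z, hw2z⟩
  refine ⟨W ∩ neg ⁻¹' W, hWo.inter (hWo.preimage hcneg), ⟨hWz, by
      simpa [gyro_neg_zero] using hWz⟩, ?_, ?_⟩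
  · ext x
    constructor
    · rintro ⟨y, ⟨hy1, hy2⟩, rfl⟩
      exact ⟨hy2, by simpa [gyro_neg_neg] using hy1⟩
    · rintro ⟨hx1, hx2⟩
      exact ⟨neg x, ⟨hx2, by simpa [gyro_neg_neg] using hx1⟩, gyro_neg_neg x⟩
  · rintro a ⟨ha, -⟩ b ⟨hb, -⟩
    exact hsub (show (a, b) ∈ w1 ×ˢ w2 from ⟨ha.1, hb.2⟩)

/-- Extension of a countable family of neighborhoods of 0 in a right ω-balanced
topological gyrogroup to a countable family γ* satisfying (1)-(4). -/
theorem countable_family_extension {G : Type u} [Gyrogroup G] [TopologicalSpace G] [T2Space G]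
    (hcadd : Continuous fun p : G × G => add p.1 p.2)
    (hcneg : Continuous (neg : G → G))
    -- right ω-balanced
    (hbal : ∀ U : Set G, IsOpen U → (zero : G) ∈ U →
      ∃ γ : Set (Set G), γ.Countable ∧ (∀ V ∈ γ, IsOpen V ∧ (zero : G) ∈ V) ∧
        ∀ x : G, ∃ V ∈ γ, ∀ v ∈ V, add x (add v (neg x)) ∈ U)
    (γ : Set (Set G)) (hγc : γ.Countable)
    (hγ : ∀ V ∈ γ, IsOpen V ∧ (zero : G) ∈ V) :
    ∃ γs : Set (Set G), γs.Countable ∧ (∀ V ∈ γs, IsOpen V ∧ (zero : G) ∈ V) ∧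
      -- (1)
      γ ⊆ γs ∧
      -- (2) closed under finite intersections
      (∀ lam : Set (Set G), lam ⊆ γs → lam.Finite → lam.Nonempty → ⋂₀ lam ∈ γs) ∧
      -- (3) symmetric square-root members
      (∀ U ∈ γs, ∃ V ∈ γs, (neg '' V = V) ∧ ∀ a ∈ V, ∀ b ∈ V, add a b ∈ U) ∧
      -- (4) right subordination
      (∀ U ∈ γs, ∀ a : G, ∃ V ∈ γs, ∀ v ∈ V, add a (add v (neg a)) ∈ U) := by
  classical
  -- choice function for the balanced families
  have hbal' : ∀ U : Set G, ∃ δ : Set (Set G), IsOpen U → (zero : G) ∈ U →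
      (δ.Countable ∧ (∀ V ∈ δ, IsOpen V ∧ (zero : G) ∈ V) ∧
        ∀ x : G, ∃ V ∈ δ, ∀ v ∈ V, add x (add v (neg x)) ∈ U) := by
    intro U
    by_cases h1 : IsOpen U
    · by_cases h2 : (zero : G) ∈ U
      · rcases hbal U h1 h2 with ⟨δ, hδ⟩
        exact ⟨δ, fun _ _ => hδ⟩
      · exact ⟨∅, fun _ h => absurd h h2⟩
    · exact ⟨∅, fun h => absurd h h1⟩
  choose bal hbalP using hbal'
  -- choice function for square roots
  have hroot' : ∀ U : Set G, ∃ V : Set G, IsOpen U → (zero : G) ∈ U →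
      (IsOpen V ∧ (zero : G) ∈ V ∧ neg '' V = V ∧ ∀ a ∈ V, ∀ b ∈ V, add a b ∈ U) := by
    intro U
    by_cases h1 : IsOpen U
    · by_cases h2 : (zero : G) ∈ U
      · rcases gyro_root hcadd hcneg U h1 h2 with ⟨V, hV⟩
        exact ⟨V, fun _ _ => hV⟩
      · exact ⟨∅, fun _ h => absurd h h2⟩
    · exact ⟨∅, fun h => absurd h h1⟩
  choose root hrootP using hroot'
  -- the saturation step
  set P : Set G → Prop := fun V => IsOpen V ∧ (zero : G) ∈ V with hPdef
  set step : Set (Set G) → Set (Set G) := fun S =>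
    S ∪ (Set.sInter '' {lam | lam.Finite ∧ lam ⊆ S ∧ lam.Nonempty})
      ∪ (root '' S) ∪ (⋃ U ∈ S, bal U) with hstep
  set F : ℕ → Set (Set G) := fun n => step^[n] γ with hF
  have hF0 : F 0 = γ := rfl
  have hFs : ∀ n, F (n + 1) = step (F n) := fun n => Function.iterate_succ_apply' step n γ
  -- invariant: countable and all members are open neighborhoods of 0
  have hinv : ∀ n, (F n).Countable ∧ ∀ V ∈ F n, P V := by
    intro n
    induction n with
    | zero => exact ⟨hγc, hγ⟩
    | succ n ih =>
      rcases ih with ⟨hc, hP⟩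
      rw [hFs]
      constructor
      · refine (((hc.union ?_).union (hc.image root)).union ?_)
        · refine Set.Countable.image ?_ _
          refine Set.Countable.mono ?_ (Set.countable_setOf_finite_subset hc)
          rintro lam ⟨h1, h2, h3⟩
          exact ⟨h1, h2⟩
        · exact Set.Countable.biUnion hc (fun U hU =>
            (hbalP U (hP U hU).1 (hP U hU).2).1)
      · rintro V (((hV | hV) | hV) | hV)
        · exact hP V hV
        · rcases hV with ⟨lam, ⟨hfin, hsub, hne⟩, rfl⟩
          constructor
          · exact hfin.isOpen_sInter (fun V hV => (hP V (hsub hV)).1)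
          · exact fun V hV => (hP V (hsub hV)).2
        · rcases hV with ⟨U, hU, rfl⟩
          rcases hrootP U (hP U hU).1 (hP U hU).2 with ⟨h1, h2, _, _⟩
          exact ⟨h1, h2⟩
        · rcases Set.mem_iUnion₂.mp hV with ⟨U, hU, hVU⟩
          exact (hbalP U (hP U hU).1 (hP U hU).2).2.1 V hVU
  have hmono : ∀ m n, m ≤ n → F m ⊆ F n := by
    have h1 : ∀ n, F n ⊆ F (n + 1) := by
      intro n
      rw [hFs]
      intro V hV
      exact Or.inl (Or.inl (Or.inl hV))
    intro m n hmn
    exact monotone_nat_of_le_succ h1 hmn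
  refine ⟨⋃ n, F n, Set.countable_iUnion (fun n => (hinv n).1),
    fun V hV => by rcases Set.mem_iUnion.mp hV with ⟨n, hn⟩; exact (hinv n).2 V hn,
    Set.subset_iUnion F 0, ?_, ?_, ?_⟩
  · -- (2)
    intro lam hsub hfin hne
    have hN : ∃ N, lam ⊆ F N := by
      have hx : ∀ V ∈ lam, ∃ n, V ∈ F n := fun V hV =>
        Set.mem_iUnion.mp (hsub hV)
      choose! f hf using hx
      obtain ⟨N, hNub⟩ := (hfin.image f).bddAbove
      refine ⟨N, fun V hV => hmono _ _ (hNub ⟨V, hV, rfl⟩) (hf V hV)⟩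
    rcases hN with ⟨N, hN⟩
    apply Set.mem_iUnion.mpr ⟨N + 1, ?_⟩
    rw [hFs]
    exact Or.inl (Or.inl (Or.inr ⟨lam, ⟨hfin, hN, hne⟩, rfl⟩))
  · -- (3)
    intro U hU
    rcases Set.mem_iUnion.mp hU with ⟨n, hn⟩
    have hPU := (hinv n).2 U hn
    rcases hrootP U hPU.1 hPU.2 with ⟨_, _, hsym, hadd⟩
    refine ⟨root U, Set.mem_iUnion.mpr ⟨n + 1, ?_⟩, hsym, hadd⟩
    rw [hFs]
    exact Or.inl (Or.inr ⟨U, hn, rfl⟩)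
  · -- (4)
    intro U hU a
    rcases Set.mem_iUnion.mp hU with ⟨n, hn⟩
    have hPU := (hinv n).2 U hn
    rcases (hbalP U hPU.1 hPU.2).2.2 a with ⟨V, hVmem, hVprop⟩
    refine ⟨V, Set.mem_iUnion.mpr ⟨n + 1, ?_⟩, hVprop⟩
    rw [hFs]
    exact Or.inr (Set.mem_iUnion₂.mpr ⟨U, hn, hVmem⟩)
end

section
/- Let G be a topological gyrogroup, U an open neighborhood of 0, and F a compact subset of G. Then there exists an open neighborhood V of 0 such that (a ⊕ V) ⊕ (b ⊕ V) ⊆ (a ⊕ b) ⊕ U for all a, b ∈ F. -/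
universe u v

open Gyrogroup

lemma Gyro.left_cancel {G : Type u} [Gyrogroup G] {a b c : G} (h : add a b = add a c) :
    b = c := by
  have h2 := congrArg (add (neg a)) h
  rw [gyrassoc (neg a) a b, gyrassoc (neg a) a c, Gyrogroup.neg_add, Gyrogroup.zero_add, Gyrogroup.zero_add] at h2
  exact (gyr (neg a) a).injective h2

lemma Gyro.gyr_zero_left {G : Type u} [Gyrogroup G] (y z : G) :
    gyr (zero : G) y z = z := by
  have h := gyrassoc (zero : G) y z
  rw [Gyrogroup.zero_add, Gyrogroup.zero_add] at h
  exact (Gyro.left_cancel h).symm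

lemma Gyro.neg_add_cancel_left {G : Type u} [Gyrogroup G] (a b : G) :
    add (neg a) (add a b) = b := by
  rw [gyrassoc (neg a) a b, Gyrogroup.neg_add, Gyrogroup.zero_add]
  have := loop (neg a) a
  rw [Gyrogroup.neg_add] at this
  rw [← this, Gyro.gyr_zero_left]

lemma Gyro.add_neg_cancel_left {G : Type u} [Gyrogroup G] (a b : G) :
    add a (add (neg a) b) = b := by
  rw [gyrassoc a (neg a) b, Gyrogroup.add_neg, Gyrogroup.zero_add]
  have := loop a (neg a)
  rw [Gyrogroup.add_neg] at this
  rw [← this, Gyro.gyr_zero_left]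

/-- For a compact set F and open neighborhood U of 0 in a topological gyrogroup,
there is an open neighborhood V of 0 with (a ⊕ V) ⊕ (b ⊕ V) ⊆ (a ⊕ b) ⊕ U for a, b ∈ F. -/
theorem compact_uniform_mul {G : Type u} [Gyrogroup G] [TopologicalSpace G] [T2Space G]
    (hcadd : Continuous fun p : G × G => add p.1 p.2)
    (hcneg : Continuous (neg : G → G))
    (U : Set G) (hU : IsOpen U) (h0 : (zero : G) ∈ U)
    (F : Set G) (hF : IsCompact F) :
    ∃ V : Set G, IsOpen V ∧ (zero : G) ∈ V ∧
      ∀ a ∈ F, ∀ b ∈ F, ∀ v ∈ V, ∀ w ∈ V,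
        ∃ u ∈ U, add (add a v) (add b w) = add (add a b) u := by
  set Φ : (G × G) × (G × G) → G := fun p =>
    add (neg (add p.1.1 p.1.2)) (add (add p.1.1 p.2.1) (add p.1.2 p.2.2)) with hΦ
  have hadd2 : ∀ {α : Type u} [TopologicalSpace α] {f g : α → G},
      Continuous f → Continuous g → Continuous (fun x => add (f x) (g x)) := by
    intro α _ f g hf hg
    exact hcadd.comp (hf.prodMk hg)
  have hΦc : Continuous Φ := by
    apply hadd2
    · exact hcneg.comp (hadd2 (continuous_fst.comp continuous_fst)
        (continuous_snd.comp continuous_fst))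
    · exact hadd2
        (hadd2 (continuous_fst.comp continuous_fst) (continuous_fst.comp continuous_snd))
        (hadd2 (continuous_snd.comp continuous_fst) (continuous_snd.comp continuous_snd))
  have hW : IsOpen (Φ ⁻¹' U) := hU.preimage hΦc
  have hsub : (F ×ˢ F) ×ˢ ({((zero : G), (zero : G))} : Set (G × G)) ⊆ Φ ⁻¹' U := by
    rintro ⟨⟨a, b⟩, ⟨v, w⟩⟩ ⟨-, hvw⟩
    simp only [Set.mem_singleton_iff, Prod.mk.injEq] at hvw
    obtain ⟨rfl, rfl⟩ := hvw
    show Φ ((a, b), (zero, zero)) ∈ U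
    simp only [hΦ, Gyrogroup.add_zero]
    rw [Gyrogroup.neg_add]
    exact h0
  obtain ⟨u, v, huo, hvo, hsu, htv, huv⟩ :=
    generalized_tube_lemma (hF.prod hF) isCompact_singleton hW hsub
  have h00 : ((zero : G), (zero : G)) ∈ v := htv rfl
  obtain ⟨V₁, V₂, hV₁, hV₂, h01, h02, hV12⟩ := isOpen_prod_iff.mp hvo _ _ h00
  refine ⟨V₁ ∩ V₂, hV₁.inter hV₂, ⟨h01, h02⟩, ?_⟩
  intro a ha b hb x hx y hy
  refine ⟨Φ ((a, b), (x, y)), ?_, ?_⟩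
  · exact huv ⟨hsu ⟨ha, hb⟩, hV12 ⟨hx.1, hy.2⟩⟩
  · simp only [hΦ]
    rw [Gyro.add_neg_cancel_left]
end

section
/- Let N be a prenorm on a gyrogroup G satisfying N(gyr[x,y](z)) = N(z) for all x,y,z. Then ϱ(x,y) := N(⊖x ⊕ y) is a left-invariant pseudometric on G: ϱ(x,x) = 0, ϱ(x,y) = ϱ(y,x), ϱ(x,z) ≤ ϱ(x,y) + ϱ(y,z), and ϱ(g ⊕ x, g ⊕ y) = ϱ(x,y) for all g, x, y ∈ G. -/
universe u v

open Gyrogroup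

section Aux
variable {G : Type u} [Gyrogroup G]

private lemma gg_cancel (a : G) {b c : G} (h : add a b = add a c) : b = c := by
  have e : ∀ b : G, add (neg a) (add a b) = gyr (neg a) a b := fun b => by
    rw [gyrassoc, Gyrogroup.neg_add, Gyrogroup.zero_add]
  have h1 : gyr (neg a) a b = gyr (neg a) a c := by rw [← e, ← e, h]
  exact (gyr (neg a) a).injective h1

private lemma gg_gyr_zero_left (y z : G) : gyr zero y z = z := by
  have h := gyrassoc zero y z
  rw [Gyrogroup.zero_add, Gyrogroup.zero_add] at h
  exact (gg_cancel y h).symm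

private lemma gg_gyr_neg_add (a z : G) : gyr (neg a) a z = z := by
  have := loop (neg a) a
  rw [Gyrogroup.neg_add] at this
  rw [← this, gg_gyr_zero_left]

private lemma gg_left_cancel (a b : G) : add (neg a) (add a b) = b := by
  rw [gyrassoc, Gyrogroup.neg_add, Gyrogroup.zero_add, gg_gyr_neg_add]

private lemma gg_neg_unique {a b : G} (h : add a b = zero) : b = neg a := by
  have := gg_left_cancel a b
  rw [h, Gyrogroup.add_zero] at this
  exact this.symm

private lemma gg_neg_neg (a : G) : neg (neg a) = a :=
  (gg_neg_unique (Gyrogroup.neg_add a)).symm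

private lemma gg_left_cancel' (a b : G) : add a (add (neg a) b) = b := by
  have := gg_left_cancel (neg a) b
  rwa [gg_neg_neg] at this

private lemma gg_main (g x y : G) :
    add (neg (add g x)) (add g y) = gyr g x (add (neg x) y) := by
  have h : add (add g x) (gyr g x (add (neg x) y)) = add g y := by
    rw [← gyrassoc, gg_left_cancel']
  calc add (neg (add g x)) (add g y)
      = add (neg (add g x)) (add (add g x) (gyr g x (add (neg x) y))) := by rw [h]
    _ = gyr g x (add (neg x) y) := gg_left_cancel _ _

private lemma gg_neg_add_rev (a b : G) :
    neg (add a b) = gyr a b (add (neg b) (neg a)) := by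
  refine (gg_neg_unique ?_).symm
  rw [← gyrassoc, gg_left_cancel', Gyrogroup.add_neg]

end Aux

/-- A gyr-invariant prenorm N induces a left-invariant pseudometric ϱ(x,y) = N(⊖x ⊕ y). -/
theorem prenorm_pseudometric {G : Type u} [Gyrogroup G] (N : G → ℝ)
    (hN0 : N zero = 0)
    (hNadd : ∀ x y : G, N (add x y) ≤ N x + N y)
    (hNneg : ∀ x : G, N (neg x) = N x)
    (hNgyr : ∀ x y z : G, N (gyr x y z) = N z) :
    (∀ x : G, N (add (neg x) x) = 0) ∧
    (∀ x y : G, N (add (neg x) y) = N (add (neg y) x)) ∧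
    (∀ x y z : G, N (add (neg x) z) ≤ N (add (neg x) y) + N (add (neg y) z)) ∧
    (∀ g x y : G, N (add (neg (add g x)) (add g y)) = N (add (neg x) y)) := by
  refine ⟨fun x => by rw [Gyrogroup.neg_add, hN0], fun x y => ?_, fun x y z => ?_, fun g x y => ?_⟩
  · rw [← hNneg (add (neg x) y), gg_neg_add_rev, hNgyr, gg_neg_neg]
  · have h : add (neg x) z = add (add (neg x) y) (gyr (neg x) y (add (neg y) z)) := by
      rw [← gyrassoc, gg_left_cancel']
    calc N (add (neg x) z) ≤ N (add (neg x) y) + N (gyr (neg x) y (add (neg y) z)) :=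
          h ▸ hNadd _ _
      _ = N (add (neg x) y) + N (add (neg y) z) := by rw [hNgyr]
  · rw [gg_main, hNgyr]
end

section
/- Let G be a gyrogroup with a prenorm N satisfying N(gyr[x,y](z)) = N(z), and define Z = {x : N(x) = 0}. Suppose there is a decreasing sequence of symmetric subsets Vₙ with Z = ⋂ₙ Vₙ, gyr[x,y](Vₙ) = Vₙ for all x,y, and (x ⊕ Vₙ₊₁) ⊕ (y ⊕ Vₙ₊₁) ⊆ (x ⊕ y) ⊕ Vₙ for all x,y ∈ G. Then Z is a normal subgyrogroup of G, i.e., (x ⊕ Z) ⊕ (y ⊕ Z) = (x ⊕ y) ⊕ Z for all x, y ∈ G. -/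
universe u v

open Gyrogroup

/-- A subgyrogroup: a subset containing 0, closed under ⊕, ⊖ and the gyroautomorphisms. -/
def IsSubgyrogroup {G : Type u} [Gyrogroup G] (H : Set G) : Prop :=
  (zero : G) ∈ H ∧ (∀ a ∈ H, ∀ b ∈ H, add a b ∈ H) ∧ (∀ a ∈ H, neg a ∈ H) ∧
    (∀ a ∈ H, ∀ b ∈ H, ∀ c ∈ H, gyr a b c ∈ H)

/-- The left coset a ⊕ B = {a ⊕ b : b ∈ B}. -/
def gCoset {G : Type u} [Gyrogroup G] (a : G) (B : Set G) : Set G :=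
  {c | ∃ b ∈ B, c = add a b}

/-- The setwise sum A ⊕ B = {a ⊕ b : a ∈ A, b ∈ B}. -/
def gSetAdd {G : Type u} [Gyrogroup G] (A B : Set G) : Set G :=
  {c | ∃ a ∈ A, ∃ b ∈ B, c = add a b}

/-- Under the stated hypotheses, Z = {x : N(x) = 0} is a normal subgyrogroup:
(x ⊕ Z) ⊕ (y ⊕ Z) = (x ⊕ y) ⊕ Z for all x, y. -/
theorem null_set_normal {G : Type u} [Gyrogroup G] (N : G → ℝ)
    (hN0 : N zero = 0)
    (hNadd : ∀ x y : G, N (add x y) ≤ N x + N y)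
    (hNneg : ∀ x : G, N (neg x) = N x)
    (hNgyr : ∀ x y z : G, N (gyr x y z) = N z)
    (V : ℕ → Set G)
    (hdec : ∀ n, V (n + 1) ⊆ V n)
    (hsymm : ∀ n, ∀ x ∈ V n, neg x ∈ V n)
    (hZ : {x : G | N x = 0} = ⋂ n, V n)
    (hgyrV : ∀ (n : ℕ) (x y : G), gyr x y '' V n = V n)
    (hmul : ∀ (n : ℕ) (x y : G),
      gSetAdd (gCoset x (V (n + 1))) (gCoset y (V (n + 1))) ⊆ gCoset (add x y) (V n)) :
    IsSubgyrogroup {x : G | N x = 0} ∧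
    ∀ x y : G, gSetAdd (gCoset x {z : G | N z = 0}) (gCoset y {z : G | N z = 0})
      = gCoset (add x y) {z : G | N z = 0} := by
  have hnonneg : ∀ x : G, 0 ≤ N x := by
    intro x
    have h := hNadd x (neg x)
    rw [Gyrogroup.add_neg, hN0, hNneg] at h
    linarith
  have hinj : ∀ w u v : G, add w u = add w v → u = v := by
    intro w u v h
    have h2 : add (neg w) (add w u) = add (neg w) (add w v) := by rw [h]
    rw [gyrassoc, gyrassoc, Gyrogroup.neg_add, Gyrogroup.zero_add, Gyrogroup.zero_add] at h2
    exact (gyr (neg w) w).injective h2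
  have hmemZ : ∀ a : G, N a = 0 ↔ ∀ n, a ∈ V n := by
    intro a
    constructor
    · intro ha n
      have : a ∈ (⋂ n, V n) := hZ ▸ (Set.mem_setOf_eq ▸ ha)
      exact Set.mem_iInter.mp this n
    · intro ha
      have : a ∈ (⋂ n, V n) := Set.mem_iInter.mpr ha
      rw [← hZ] at this
      exact this
  constructor
  · refine ⟨hN0, ?_, ?_, ?_⟩
    · intro a ha b hb
      simp only [Set.mem_setOf_eq] at *
      have h1 := hNadd a b
      have h2 := hnonneg (add a b)
      linarith
    · intro a ha
      simp only [Set.mem_setOf_eq] at *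
      rw [hNneg]; exact ha
    · intro a _ b _ c hc
      simp only [Set.mem_setOf_eq] at *
      rw [hNgyr]; exact hc
  · intro x y
    ext c
    constructor
    · rintro ⟨p, ⟨a, ha, hp⟩, q, ⟨b, hb, hq⟩, hc⟩
      have haV : ∀ n, a ∈ V n := (hmemZ a).mp ha
      have hbV : ∀ n, b ∈ V n := (hmemZ b).mp hb
      have key : ∀ n, c ∈ gCoset (add x y) (V n) := by
        intro n
        exact hmul n x y ⟨p, ⟨a, haV (n + 1), hp⟩, q, ⟨b, hbV (n + 1), hq⟩, hc⟩
      obtain ⟨v, hv0, hcv⟩ := key 0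
      have hvZ : N v = 0 := by
        rw [hmemZ]
        intro n
        obtain ⟨w, hw, hcw⟩ := key n
        have : v = w := hinj (add x y) v w (hcv ▸ hcw ▸ rfl)
        rw [this]; exact hw
      exact ⟨v, hvZ, hcv⟩
    · rintro ⟨z, hz, hcz⟩
      set z' := (gyr x y).symm z with hz'
      have hgz : gyr x y z' = z := Equiv.apply_symm_apply _ _
      have hz'Z : N z' = 0 := by
        have := hNgyr x y z'
        rw [hgz] at this
        rw [← this]; exact hz
      refine ⟨x, ⟨zero, hN0, (Gyrogroup.add_zero x).symm⟩, add y z', ⟨z', hz'Z, rfl⟩, ?_⟩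
      rw [hcz, gyrassoc, hgz]
end

section
/- Let 𝒫 be a class of topological gyrogroups closed under finite products, and let H = ∏_{α ∈ A} H_α be a topological product of gyrogroups H_α ∈ 𝒫. Then H (and hence every subgyrogroup of H) is range-𝒫: for every open neighborhood U of the identity of H there exist a continuous gyrogroup homomorphism π from H to a gyrogroup K ∈ 𝒫 and an open neighborhood V of the identity of K with π⁻¹(V) ⊆ U. -/
universe u v

open Gyrogroup

/-- The pointwise gyrogroup structure on a product of gyrogroups. -/
instance piGyrogroup {ι : Type v} (H : ι → Type u) [∀ i, Gyrogroup (H i)] :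
    Gyrogroup (∀ i, H i) where
  add f g := fun i => add (f i) (g i)
  zero := fun _ => zero
  neg f := fun i => neg (f i)
  gyr f g :=
    { toFun := fun z i => gyr (f i) (g i) (z i)
      invFun := fun z i => (gyr (f i) (g i)).symm (z i)
      left_inv := fun z => funext fun i => (gyr (f i) (g i)).symm_apply_apply (z i)
      right_inv := fun z => funext fun i => (gyr (f i) (g i)).apply_symm_apply (z i) }
  zero_add f := funext fun i => Gyrogroup.zero_add (f i)
  add_zero f := funext fun i => Gyrogroup.add_zero (f i)
  neg_add f := funext fun i => Gyrogroup.neg_add (f i)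
  add_neg f := funext fun i => Gyrogroup.add_neg (f i)
  gyr_hom x y a b := funext fun i => Gyrogroup.gyr_hom (x i) (y i) (a i) (b i)
  gyrassoc x y z := funext fun i => Gyrogroup.gyrassoc (x i) (y i) (z i)
  loop x y := Equiv.ext fun z => funext fun i => by
    show gyr (add (x i) (y i)) (y i) (z i) = gyr (x i) (y i) (z i)
    rw [Gyrogroup.loop]

/-- A bundled topological gyrogroup (carrier, topology, gyrogroup structure). -/
structure TopGyro : Type (u + 1) where
  carrier : Type u
  top : TopologicalSpace carrier
  gyro : Gyrogroup carrier

instance (K : TopGyro.{u}) : TopologicalSpace K.carrier := K.top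
instance (K : TopGyro.{u}) : Gyrogroup K.carrier := K.gyro

/-- If 𝒫 is a class of topological gyrogroups containing all finite subproducts of a family
H_α (as it does whenever each H_α ∈ 𝒫 and 𝒫 is closed under finite products), then the
topological product H = ∏ H_α, and every subgyrogroup of H, is range-𝒫. -/
theorem product_range_class {A : Type u} (H : A → Type u)
    [∀ a, TopologicalSpace (H a)] [∀ a, Gyrogroup (H a)]
    (hcadd : ∀ a, Continuous fun p : H a × H a => add p.1 p.2)
    (hcneg : ∀ a, Continuous (neg : H a → H a))
    (P : Set TopGyro.{u})
    (hmem : ∀ s : Finset A,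
      (⟨(∀ i : s, H i), inferInstance, inferInstance⟩ : TopGyro.{u}) ∈ P) :
    (∀ U : Set (∀ a, H a), IsOpen U → (zero : ∀ a, H a) ∈ U →
      ∃ K ∈ P, ∃ π : (∀ a, H a) → K.carrier,
        Continuous π ∧
        (∀ x y : ∀ a, H a, π (add x y) = add (π x) (π y)) ∧
        ∃ V : Set K.carrier, IsOpen V ∧ (zero : K.carrier) ∈ V ∧ π ⁻¹' V ⊆ U) ∧
    (∀ S : Set (∀ a, H a), IsSubgyrogroup S →
      ∀ U : Set S, IsOpen U → (∀ z : S, (z : ∀ a, H a) = zero → z ∈ U) →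
        ∃ K ∈ P, ∃ π : S → K.carrier,
          Continuous π ∧
          (∀ x y z : S, (z : ∀ a, H a) = add (x : ∀ a, H a) (y : ∀ a, H a) →
            π z = add (π x) (π y)) ∧
          ∃ V : Set K.carrier, IsOpen V ∧ (zero : K.carrier) ∈ V ∧ π ⁻¹' V ⊆ U) := by
  have main : ∀ U : Set (∀ a, H a), IsOpen U → (zero : ∀ a, H a) ∈ U →
      ∃ K ∈ P, ∃ π : (∀ a, H a) → K.carrier,
        Continuous π ∧
        (∀ x y : ∀ a, H a, π (add x y) = add (π x) (π y)) ∧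
        ∃ V : Set K.carrier, IsOpen V ∧ (zero : K.carrier) ∈ V ∧ π ⁻¹' V ⊆ U := by
    intro U hU h0
    obtain ⟨I, u, hu, hsub⟩ := (isOpen_pi_iff.mp hU) _ h0
    refine ⟨⟨(∀ i : I, H i), inferInstance, inferInstance⟩, hmem I,
      fun x i => x i, continuous_pi fun i => continuous_apply _, fun x y => rfl,
      Set.univ.pi (fun i : I => u i), isOpen_set_pi Set.finite_univ
        (fun i _ => (hu i i.2).1), fun i _ => (hu i i.2).2, ?_⟩
    intro x hx
    exact hsub (fun a ha => hx ⟨a, ha⟩ (Set.mem_univ _))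
  refine ⟨main, ?_⟩
  intro S hS U hU h0
  obtain ⟨W, hW, hWU⟩ := isOpen_induced_iff.mp hU
  have hz : (⟨zero, hS.1⟩ : S) ∈ U := h0 _ rfl
  have hzW : (zero : ∀ a, H a) ∈ W := by
    rw [← hWU] at hz; exact hz
  obtain ⟨K, hK, π, hπc, hπh, V, hV, hzV, hVW⟩ := main W hW hzW
  refine ⟨K, hK, fun x => π x, hπc.comp continuous_subtype_val, ?_, V, hV, hzV, ?_⟩
  · intro x y z hz'
    show π (z : ∀ a, H a) = _
    rw [hz', hπh]
  · intro x hx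
    rw [← hWU]
    exact hVW hx
end
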